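/- Let $X_1,\dots,X_n$ be negatively associated random variables with $a_i \le X_i \le b_i$ almost surely, and $S_n = X_1 + \cdots + X_n$. Then for all $t > 0$, $\Pr[|S_n - \mathbb{E}[S_n]| \ge t] \le 2\exp\left(-\frac{2t^2}{\sum_{i=1}^n (b_i - a_i)^2}\right)$. -/

import Mathlib

open MeasureTheory

/-- Negative association (see paper, Definition 3.5). -/
def NegAssoc {Ω ι : Type*} [MeasurableSpace Ω] (μ : Measure Ω) (X : ι → Ω → ℝ) : Prop :=
  ∀ (I J : Finset ι), Disjoint I J →
    ∀ (f : (I → ℝ) → ℝ) (g : (J → ℝ) → ℝ),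
      ((Monotone f ∧ Monotone g) ∨ (Antitone f ∧ Antitone g)) →
      Measurable f → Measurable g →
      ∫ ω, f (fun i => X i ω) * g (fun j => X j ω) ∂μ ≤
        (∫ ω, f (fun i => X i ω) ∂μ) * ∫ ω, g (fun j => X j ω) ∂μ

/-! Negative association replaces independence in the Chernoff method: for `j ∉ s` the functions
`exp (t * X j)` and `exp (t * ∑ i ∈ s, X i)` are both non-decreasing (`t ≥ 0`) or both
non-increasing (`t ≤ 0`) in the variables, so the mgf of a sum is at most the product of the mgfs.
The centred sum therefore inherits the sub-Gaussian constants `((b i - a i) / 2) ^ 2` of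
Hoeffding's lemma, and the Chernoff bound on both tails gives the claim. -/

open ProbabilityTheory Real
open scoped NNReal

namespace ProbabilityTheory.HasSubgaussianMGF

variable {Ω : Type*} [MeasurableSpace Ω] {μ : Measure Ω} {X Y : Ω → ℝ} {c cX cY : ℝ≥0}

lemma add_of_mgf_add_le (hX : HasSubgaussianMGF X cX μ) (hY : HasSubgaussianMGF Y cY μ)
    (hXY : ∀ t, mgf (fun ω ↦ X ω + Y ω) μ t ≤ mgf X μ t * mgf Y μ t) :
    HasSubgaussianMGF (fun ω ↦ X ω + Y ω) (cX + cY) μ where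
  integrable_exp_mul t := by
    simp_rw [mul_add, exp_add]
    convert! MemLp.integrable_mul (hX.memLp_exp_mul t 2) (hY.memLp_exp_mul t 2)
    norm_cast
    infer_instance
  mgf_le t :=
    calc mgf (fun ω ↦ X ω + Y ω) μ t
      _ ≤ mgf X μ t * mgf Y μ t := hXY t
      _ ≤ exp (cX * t ^ 2 / 2) * exp (cY * t ^ 2 / 2) := by
        gcongr
        · exact mgf_nonneg
        · exact hX.mgf_le t
        · exact hY.mgf_le t
      _ = exp ((cX + cY) * t ^ 2 / 2) := by rw [← exp_add]; ring_nf

lemma measure_abs_ge_le (h : HasSubgaussianMGF X c μ) {ε : ℝ} (hε : 0 ≤ ε) :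
    μ.real {ω | ε ≤ |X ω|} ≤ 2 * exp (-ε ^ 2 / (2 * c)) := by
  have hunion : {ω | ε ≤ |X ω|} = {ω | ε ≤ X ω} ∪ {ω | ε ≤ (-X) ω} := by
    ext ω
    simp [le_abs]
  calc μ.real {ω | ε ≤ |X ω|}
    _ ≤ μ.real {ω | ε ≤ X ω} + μ.real {ω | ε ≤ (-X) ω} :=
      hunion ▸ measureReal_union_le _ _
    _ ≤ exp (-ε ^ 2 / (2 * c)) + exp (-ε ^ 2 / (2 * c)) :=
      add_le_add (h.measure_ge_le hε) (h.neg.measure_ge_le hε)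
    _ = 2 * exp (-ε ^ 2 / (2 * c)) := by ring

end ProbabilityTheory.HasSubgaussianMGF

namespace NegAssoc

variable {Ω ι : Type*} [MeasurableSpace Ω] {μ : Measure Ω} {X : ι → Ω → ℝ}

lemma comp_monotone (hX : NegAssoc μ X) {φ : ι → ℝ → ℝ} (hφ : ∀ i, Monotone (φ i)) :
    NegAssoc μ (fun i ω ↦ φ i (X i ω)) := by
  intro I J hIJ f g hfg hf hg
  let Φ : (K : Finset ι) → (K → ℝ) → K → ℝ := fun _ x k ↦ φ k (x k)
  have hΦ_mono (K : Finset ι) : Monotone (Φ K) := fun x y hxy k ↦ hφ k (hxy k)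
  have hΦ_meas (K : Finset ι) : Measurable (Φ K) :=
    measurable_pi_lambda _ fun k ↦ (hφ k).measurable.comp (measurable_pi_apply k)
  refine hX I J hIJ (f ∘ Φ I) (g ∘ Φ J) ?_ (hf.comp (hΦ_meas I)) (hg.comp (hΦ_meas J))
  rcases hfg with ⟨hf, hg⟩ | ⟨hf, hg⟩
  · exact Or.inl ⟨hf.comp (hΦ_mono I), hg.comp (hΦ_mono J)⟩
  · exact Or.inr ⟨hf.comp_monotone (hΦ_mono I), hg.comp_monotone (hΦ_mono J)⟩

lemma mgf_add_sum_le (hX : NegAssoc μ X) {s : Finset ι} {j : ι} (hj : j ∉ s) (t : ℝ) :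
    mgf (fun ω ↦ X j ω + ∑ i ∈ s, X i ω) μ t ≤
      mgf (X j) μ t * mgf (fun ω ↦ ∑ i ∈ s, X i ω) μ t := by
  let f : (({j} : Finset ι) → ℝ) → ℝ := fun x ↦ exp (t * x ⟨j, Finset.mem_singleton_self j⟩)
  let g : (s → ℝ) → ℝ := fun x ↦ exp (t * ∑ i, x i)
  have hfg : (Monotone f ∧ Monotone g) ∨ (Antitone f ∧ Antitone g) := by
    rcases le_total 0 t with ht | ht
    · exact Or.inl ⟨fun x y hxy ↦ exp_le_exp.2 (mul_le_mul_of_nonneg_left (hxy _) ht),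
        fun x y hxy ↦ exp_le_exp.2
          (mul_le_mul_of_nonneg_left (Finset.sum_le_sum fun i _ ↦ hxy i) ht)⟩
    · exact Or.inr ⟨fun x y hxy ↦ exp_le_exp.2 (mul_le_mul_of_nonpos_left (hxy _) ht),
        fun x y hxy ↦ exp_le_exp.2
          (mul_le_mul_of_nonpos_left (Finset.sum_le_sum fun i _ ↦ hxy i) ht)⟩
  have key := hX {j} s (Finset.disjoint_singleton_left.2 hj) f g hfg (by fun_prop) (by fun_prop)
  have hg (ω : Ω) : g (fun i ↦ X i ω) = exp (t * ∑ i ∈ s, X i ω) := by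
    rw [← Finset.sum_coe_sort s]
  simpa only [mgf, f, hg, mul_add, exp_add] using key

lemma hasSubgaussianMGF_sum [IsZeroOrProbabilityMeasure μ] (hX : NegAssoc μ X)
    {c : ι → ℝ≥0} {s : Finset ι} (h : ∀ i ∈ s, HasSubgaussianMGF (X i) (c i) μ) :
    HasSubgaussianMGF (fun ω ↦ ∑ i ∈ s, X i ω) (∑ i ∈ s, c i) μ := by
  classical
  induction s using Finset.induction_on with
  | empty => simp
  | insert j s hj ih =>
    simp_rw [Finset.sum_insert hj]
    exact (h j (Finset.mem_insert_self j s)).add_of_mgf_add_le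
      (ih fun i hi ↦ h i (Finset.mem_insert_of_mem hi)) (hX.mgf_add_sum_le hj)

end NegAssoc

/-- Hoeffding's inequality for negatively associated bounded random variables. -/
theorem hoeffding_negAssoc {Ω : Type*} [MeasurableSpace Ω] (μ : Measure Ω)
    [IsProbabilityMeasure μ] (n : ℕ) (X : Fin n → Ω → ℝ) (a b : Fin n → ℝ)
    (hmeas : ∀ i, Measurable (X i))
    (hbdd : ∀ i, ∀ᵐ ω ∂μ, a i ≤ X i ω ∧ X i ω ≤ b i)
    (hNA : NegAssoc μ X) (t : ℝ) (ht : 0 < t) :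
    (μ {ω | t ≤ |(∑ i, X i ω) - ∫ ω', ∑ i, X i ω' ∂μ|}).toReal ≤
      2 * Real.exp (-(2 * t ^ 2 / ∑ i, (b i - a i) ^ 2)) := by
  have hIcc (i : Fin n) : ∀ᵐ ω ∂μ, X i ω ∈ Set.Icc (a i) (b i) := hbdd i
  have hcentred : NegAssoc μ (fun i ω ↦ X i ω - μ[X i]) :=
    hNA.comp_monotone (φ := fun i x ↦ x - μ[X i]) fun i _ _ h ↦ sub_le_sub_right h _
  have hsum := hcentred.hasSubgaussianMGF_sum (s := Finset.univ)
    fun i _ ↦ hasSubgaussianMGF_of_mem_Icc (hmeas i).aemeasurable (hIcc i)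
  have hS : ∀ ω, ∑ i, (X i ω - μ[X i]) = (∑ i, X i ω) - ∫ ω', ∑ i, X i ω' ∂μ := fun ω ↦ by
    rw [integral_finsetSum _ fun i _ ↦ Integrable.of_mem_Icc _ _ (hmeas i).aemeasurable (hIcc i),
      Finset.sum_sub_distrib]
  simp_rw [hS] at hsum
  calc (μ {ω | t ≤ |(∑ i, X i ω) - ∫ ω', ∑ i, X i ω' ∂μ|}).toReal
    _ ≤ 2 * exp (-t ^ 2 / (2 * ((∑ i, (‖b i - a i‖₊ / 2) ^ 2 : ℝ≥0) : ℝ))) :=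
      hsum.measure_abs_ge_le ht.le
    _ = 2 * exp (-(2 * t ^ 2 / ∑ i, (b i - a i) ^ 2)) := by
      congr 2
      push_cast
      simp only [norm_eq_abs, div_pow, sq_abs, ← Finset.sum_div]
      ring
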